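/- In the category of graphs, every pushout square whose two given span morphisms are injective (monomorphisms) is also a pullback square. -/

import Mathlib

/-- A directed multigraph: vertices, edges, source and target maps. -/
structure Graph' where
  V : Type
  E : Type
  s : E → V
  t : E → V

/-- A graph morphism: maps on vertices and edges commuting with source/target. -/
structure Hom (G H : Graph') where
  fV : G.V → H.V
  fE : G.E → H.E
  src : ∀ e, fV (G.s e) = H.s (fE e)
  tgt : ∀ e, fV (G.t e) = H.t (fE e)

def Hom.id (G : Graph') : Hom G G :=
  ⟨_root_.id, _root_.id, fun _ => rfl, fun _ => rfl⟩

def Hom.comp {G H K : Graph'} (g : Hom H K) (f : Hom G H) : Hom G K where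
  fV := g.fV ∘ f.fV
  fE := g.fE ∘ f.fE
  src := fun e => by simp only [Function.comp_apply, f.src e, g.src (f.fE e)]
  tgt := fun e => by simp only [Function.comp_apply, f.tgt e, g.tgt (f.fE e)]

/-- A graph morphism is injective if both components are injective. -/
def Hom.Injective {G H : Graph'} (f : Hom G H) : Prop :=
  Function.Injective f.fV ∧ Function.Injective f.fE

/-- Two morphisms into a common codomain are jointly surjective if every
vertex and every edge of the codomain is in the image of one of them. -/
def JointlySurjective {G H K : Graph'} (i : Hom G K) (j : Hom H K) : Prop :=
  (∀ v : K.V, (∃ x, i.fV x = v) ∨ (∃ y, j.fV y = v)) ∧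
  (∀ e : K.E, (∃ x, i.fE x = e) ∨ (∃ y, j.fE y = e))

/-- A graph morphism is an isomorphism if it has a two-sided inverse. -/
def IsIso {G H : Graph'} (f : Hom G H) : Prop :=
  ∃ g : Hom H G, g.comp f = Hom.id G ∧ f.comp g = Hom.id H
/-- The square with span `f : A → B`, `g : A → C` and cocone
`f' : C → D`, `g' : B → D` is a pushout: it commutes and satisfies the
universal property of pushouts. -/
def IsPushout {A B C D : Graph'} (f : Hom A B) (g : Hom A C)
    (f' : Hom C D) (g' : Hom B D) : Prop :=
  g'.comp f = f'.comp g ∧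
    ∀ (X : Graph') (h : Hom B X) (k : Hom C X), h.comp f = k.comp g →
      ∃! x : Hom D X, x.comp g' = h ∧ x.comp f' = k

/-- The square with apex `A`, legs `f : A → B`, `g : A → C` and cospan
`f' : C → D`, `g' : B → D` is a pullback: it commutes and satisfies the
universal property of pullbacks. -/
def IsPullback {A B C D : Graph'} (f : Hom A B) (g : Hom A C)
    (f' : Hom C D) (g' : Hom B D) : Prop :=
  g'.comp f = f'.comp g ∧
    ∀ (X : Graph') (h : Hom X B) (k : Hom X C), g'.comp h = f'.comp k →
      ∃! x : Hom X A, f.comp x = h ∧ g.comp x = k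

/- ===== Auxiliary material ===== -/

lemma Hom.ext' {G H : Graph'} {p q : Hom G H} (h1 : p.fV = q.fV) (h2 : p.fE = q.fE) :
    p = q := by
  cases p; cases q; cases h1; cases h2; rfl

section PushAux

variable {α β γ : Type} (F : α → β) (G : α → γ)

/-- Generating relation for the pushout quotient. -/
def pRel : β ⊕ γ → β ⊕ γ → Prop :=
  fun x y => ∃ a, x = Sum.inl (F a) ∧ y = Sum.inr (G a)

/-- The equivalence relation generated, described explicitly. -/
def pRelC : β ⊕ γ → β ⊕ γ → Prop
  | Sum.inl b, Sum.inl b' => b = b'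
  | Sum.inl b, Sum.inr c => ∃ a, F a = b ∧ G a = c
  | Sum.inr c, Sum.inl b => ∃ a, F a = b ∧ G a = c
  | Sum.inr c, Sum.inr c' => c = c'

lemma pRelC_of_eqvGen (hF : Function.Injective F) (hG : Function.Injective G)
    {x y : β ⊕ γ} (h : Relation.EqvGen (pRel F G) x y) : pRelC F G x y := by
  induction h with
  | rel x y h => obtain ⟨a, rfl, rfl⟩ := h; exact ⟨a, rfl, rfl⟩
  | refl x => cases x <;> simp [pRelC]
  | symm x y _ ih =>
      cases x <;> cases y <;> simp only [pRelC] at ih ⊢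
      · exact ih.symm
      · exact ih
      · exact ih
      · exact ih.symm
  | trans x y z _ _ ih1 ih2 =>
      cases x <;> cases y <;> cases z <;> simp only [pRelC] at ih1 ih2 ⊢
      · exact ih1.trans ih2
      · exact ih1 ▸ ih2
      · obtain ⟨a, ha1, ha2⟩ := ih1
        obtain ⟨a', ha1', ha2'⟩ := ih2
        have haa : a = a' := hG (ha2.trans ha2'.symm)
        exact ha1.symm.trans (haa ▸ ha1')
      · obtain ⟨a, ha1, ha2⟩ := ih1; exact ⟨a, ha1, ha2.trans ih2⟩
      · obtain ⟨a, ha1, ha2⟩ := ih1; exact ⟨a, ha1.trans ih2, ha2⟩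
      · obtain ⟨a, ha1, ha2⟩ := ih1
        obtain ⟨a', ha1', ha2'⟩ := ih2
        have haa : a = a' := hF (ha1.trans ha1'.symm)
        exact ha2.symm.trans (haa ▸ ha2')
      · exact ih1 ▸ ih2
      · exact ih1.trans ih2

lemma pRel_inl_inl (hF : Function.Injective F) (hG : Function.Injective G)
    {b b' : β} (h : Quot.mk (pRel F G) (Sum.inl b) = Quot.mk (pRel F G) (Sum.inl b')) :
    b = b' :=
  pRelC_of_eqvGen F G hF hG (Quot.eqvGen_exact h)

lemma pRel_inr_inr (hF : Function.Injective F) (hG : Function.Injective G)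
    {c c' : γ} (h : Quot.mk (pRel F G) (Sum.inr c) = Quot.mk (pRel F G) (Sum.inr c')) :
    c = c' :=
  pRelC_of_eqvGen F G hF hG (Quot.eqvGen_exact h)

lemma pRel_inl_inr (hF : Function.Injective F) (hG : Function.Injective G)
    {b : β} {c : γ} (h : Quot.mk (pRel F G) (Sum.inl b) = Quot.mk (pRel F G) (Sum.inr c)) :
    ∃ a, F a = b ∧ G a = c :=
  pRelC_of_eqvGen F G hF hG (Quot.eqvGen_exact h)

end PushAux

variable {A B C D : Graph'}

/-- The concrete pushout graph of a span. -/
def PO (f : Hom A B) (g : Hom A C) : Graph' where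
  V := Quot (pRel f.fV g.fV)
  E := Quot (pRel f.fE g.fE)
  s := Quot.lift
    (fun e => match e with
      | Sum.inl e => Quot.mk _ (Sum.inl (B.s e))
      | Sum.inr e => Quot.mk _ (Sum.inr (C.s e)))
    (by
      rintro x y ⟨a, rfl, rfl⟩
      simp only
      rw [← f.src a, ← g.src a]
      exact Quot.sound ⟨A.s a, rfl, rfl⟩)
  t := Quot.lift
    (fun e => match e with
      | Sum.inl e => Quot.mk _ (Sum.inl (B.t e))
      | Sum.inr e => Quot.mk _ (Sum.inr (C.t e)))
    (by
      rintro x y ⟨a, rfl, rfl⟩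
      simp only
      rw [← f.tgt a, ← g.tgt a]
      exact Quot.sound ⟨A.t a, rfl, rfl⟩)

/-- Canonical map `B → PO f g`. -/
def inB (f : Hom A B) (g : Hom A C) : Hom B (PO f g) where
  fV := fun b => Quot.mk _ (Sum.inl b)
  fE := fun e => Quot.mk _ (Sum.inl e)
  src := fun _ => rfl
  tgt := fun _ => rfl

/-- Canonical map `C → PO f g`. -/
def inC (f : Hom A B) (g : Hom A C) : Hom C (PO f g) where
  fV := fun c => Quot.mk _ (Sum.inr c)
  fE := fun e => Quot.mk _ (Sum.inr e)
  src := fun _ => rfl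
  tgt := fun _ => rfl

lemma inBC_comm (f : Hom A B) (g : Hom A C) :
    (inB f g).comp f = (inC f g).comp g := by
  apply Hom.ext'
  · funext a; exact Quot.sound ⟨a, rfl, rfl⟩
  · funext a; exact Quot.sound ⟨a, rfl, rfl⟩

/-- In the category of graphs, a pushout square whose span morphisms are
injective is also a pullback square. -/
theorem stmt_8 {A B C D : Graph'}
    (f : Hom A B) (g : Hom A C) (f' : Hom C D) (g' : Hom B D)
    (hf : f.Injective) (hg : g.Injective)
    (h : IsPushout f g f' g') :
    IsPullback f g f' g' := by
  obtain ⟨hcomm, huniv⟩ := h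
  obtain ⟨x, ⟨hx1, hx2⟩, -⟩ := huniv (PO f g) (inB f g) (inC f g) (inBC_comm f g)
  have hx1V : ∀ b, x.fV (g'.fV b) = Quot.mk _ (Sum.inl b) :=
    fun b => congrFun (congrArg Hom.fV hx1) b
  have hx1E : ∀ e, x.fE (g'.fE e) = Quot.mk _ (Sum.inl e) :=
    fun e => congrFun (congrArg Hom.fE hx1) e
  have hx2V : ∀ c, x.fV (f'.fV c) = Quot.mk _ (Sum.inr c) :=
    fun c => congrFun (congrArg Hom.fV hx2) c
  have hx2E : ∀ e, x.fE (f'.fE e) = Quot.mk _ (Sum.inr e) :=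
    fun e => congrFun (congrArg Hom.fE hx2) e
  have interV : ∀ {b c}, g'.fV b = f'.fV c → ∃ a, f.fV a = b ∧ g.fV a = c := by
    intro b c hbc
    apply pRel_inl_inr f.fV g.fV hf.1 hg.1
    rw [← hx1V, ← hx2V, hbc]
  have interE : ∀ {b c}, g'.fE b = f'.fE c → ∃ a, f.fE a = b ∧ g.fE a = c := by
    intro b c hbc
    apply pRel_inl_inr f.fE g.fE hf.2 hg.2
    rw [← hx1E, ← hx2E, hbc]
  refine ⟨hcomm, fun X h k hk => ?_⟩
  have hkV : ∀ v, g'.fV (h.fV v) = f'.fV (k.fV v) :=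
    fun v => congrFun (congrArg Hom.fV hk) v
  have hkE : ∀ e, g'.fE (h.fE e) = f'.fE (k.fE e) :=
    fun e => congrFun (congrArg Hom.fE hk) e
  choose uV huV1 huV2 using fun v => interV (hkV v)
  choose uE huE1 huE2 using fun e => interE (hkE e)
  refine ⟨⟨uV, uE, ?_, ?_⟩, ⟨?_, ?_⟩, ?_⟩
  · intro e
    apply hf.1
    rw [huV1, f.src, huE1, h.src]
  · intro e
    apply hf.1
    rw [huV1, f.tgt, huE1, h.tgt]
  · exact Hom.ext' (funext fun v => huV1 v) (funext fun e => huE1 e)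
  · exact Hom.ext' (funext fun v => huV2 v) (funext fun e => huE2 e)
  · rintro y ⟨hy1, hy2⟩
    apply Hom.ext'
    · funext v
      apply hf.1
      rw [huV1]
      exact congrFun (congrArg Hom.fV hy1) v
    · funext e
      apply hf.2
      rw [huE1]
      exact congrFun (congrArg Hom.fE hy1) e
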